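/- arXiv:2011.13203 — 4 statements merged into one kernel-verified Lean document; each statement's English description precedes it below -/
import Mathlib

section
/- For any n ≥ 2 agents there exists a successful call sequence of length 2n−3 after which all agents are experts: one fixed agent calls each of the other n−1 agents in turn, and then calls the first n−2 of them again. -/
/-! Let `a` be a hub and list the other agents as `m ++ [c]`. Calling `a` with every agent of `m`
lets `a` collect their secrets; the call `a c` then makes both `a` and `c` experts; calling `a` with
every agent of `m` once more hands all secrets to them. That is `(n - 2) + 1 + (n - 2)` calls. -/

variable {A : Type*}

/-- Effect of one call `c` on a secret relation `S`:
`S ∪ ({(x,y),(y,x)} ∘ S)` where `c = (x,y)`. -/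
def gstep (S : Set (A × A)) (c : A × A) : Set (A × A) :=
  S ∪ {p | (p.1 = c.1 ∧ (c.2, p.2) ∈ S) ∨ (p.1 = c.2 ∧ (c.1, p.2) ∈ S)}

/-- `S^σ`: the result of applying the call sequence `σ` to `S`. -/
def applyCalls (S : Set (A × A)) (σ : List (A × A)) : Set (A × A) :=
  σ.foldl gstep S

/-- `I^σ`: the secret relation generated by `σ` from the identity relation. -/
def secrets (σ : List (A × A)) : Set (A × A) :=
  applyCalls {p | p.1 = p.2} σ

/-- `I^σ_x`: the set of secrets agent `x` knows after `σ`. -/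
def secretsOf (σ : List (A × A)) (x : A) : Set A :=
  {z | (x, z) ∈ secrets σ}

lemma subset_gstep (S : Set (A × A)) (c : A × A) : S ⊆ gstep S c :=
  Set.subset_union_left

lemma mem_gstep_left {S : Set (A × A)} {c : A × A} {z : A} (h : (c.2, z) ∈ S) :
    (c.1, z) ∈ gstep S c :=
  Or.inr (Or.inl ⟨rfl, h⟩)

lemma mem_gstep_right {S : Set (A × A)} {c : A × A} {z : A} (h : (c.1, z) ∈ S) :
    (c.2, z) ∈ gstep S c :=
  Or.inr (Or.inr ⟨rfl, h⟩)

lemma mem_gstep_of_mem_or {S : Set (A × A)} {x y z : A} (h : (x, z) ∈ S ∨ (y, z) ∈ S) :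
    (x, z) ∈ gstep S (x, y) ∧ (y, z) ∈ gstep S (x, y) := by
  rcases h with h | h
  · exact ⟨subset_gstep _ _ h, mem_gstep_right h⟩
  · exact ⟨mem_gstep_left h, subset_gstep _ _ h⟩

lemma applyCalls_cons (S : Set (A × A)) (c : A × A) (σ : List (A × A)) :
    applyCalls S (c :: σ) = applyCalls (gstep S c) σ :=
  rfl

lemma applyCalls_append (S : Set (A × A)) (σ τ : List (A × A)) :
    applyCalls S (σ ++ τ) = applyCalls (applyCalls S σ) τ :=
  List.foldl_append

lemma subset_applyCalls (S : Set (A × A)) (σ : List (A × A)) : S ⊆ applyCalls S σ := by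
  induction σ generalizing S with
  | nil => rfl
  | cons c σ ih => exact (subset_gstep S c).trans (ih _)

lemma hub_mem_applyCalls_of_spoke_mem {S : Set (A × A)} {a b z : A} {l : List A}
    (hb : b ∈ l) (h : (b, z) ∈ S) : (a, z) ∈ applyCalls S (l.map (Prod.mk a)) := by
  induction l generalizing S with
  | nil => simp at hb
  | cons b' l ih =>
    rw [List.map_cons, applyCalls_cons]
    by_cases hbb' : b = b'
    · subst hbb'
      exact subset_applyCalls _ _ (mem_gstep_left h)
    · exact ih (List.mem_of_ne_of_mem hbb' hb) (subset_gstep _ _ h)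

lemma spoke_mem_applyCalls_of_hub_mem {S : Set (A × A)} {a b z : A} {l : List A}
    (hb : b ∈ l) (h : (a, z) ∈ S) : (b, z) ∈ applyCalls S (l.map (Prod.mk a)) := by
  induction l generalizing S with
  | nil => simp at hb
  | cons b' l ih =>
    rw [List.map_cons, applyCalls_cons]
    by_cases hbb' : b = b'
    · subst hbb'
      exact subset_applyCalls _ _ (mem_gstep_right h)
    · exact ih (List.mem_of_ne_of_mem hbb' hb) (subset_gstep _ _ h)

lemma exists_list_cover_of_two_le_card [Fintype A] [DecidableEq A] (a : A)
    (hn : 2 ≤ Fintype.card A) :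
    ∃ (m : List A) (c : A), m.length = Fintype.card A - 2 ∧ ∀ z, z = a ∨ z ∈ m ∨ z = c := by
  obtain ⟨m, c, hl⟩ : ∃ m c, (Finset.univ.erase a).toList = m ++ [c] := by
    rcases (Finset.univ.erase a).toList.eq_nil_or_concat with h | ⟨m, c, h⟩
    · have := congrArg List.length h
      simp [Finset.card_erase_of_mem] at this
      omega
    · exact ⟨m, c, by simpa using h⟩
  refine ⟨m, c, ?_, fun z => ?_⟩
  · have := congrArg List.length hl
    simp [Finset.card_erase_of_mem] at this
    omega
  · by_cases hz : z = a
    · exact Or.inl hz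
    · simpa [hz] using congrArg (z ∈ ·) hl

/-- For `n ≥ 2` agents there is a successful call sequence of length `2n - 3`. -/
theorem successful_in_two_n_sub_three [Fintype A]
    (hn : 2 ≤ Fintype.card A) :
    ∃ σ : List (A × A), σ.length = 2 * Fintype.card A - 3 ∧
      secrets σ = (Set.univ : Set (A × A)) := by
  classical
  obtain ⟨a⟩ : Nonempty A := Fintype.card_pos_iff.mp (by omega)
  obtain ⟨m, c, hlen, hagents⟩ := exists_list_cover_of_two_le_card a hn
  refine ⟨m.map (Prod.mk a) ++ (a, c) :: m.map (Prod.mk a), ?_, ?_⟩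
  · simp only [List.length_append, List.length_cons, List.length_map]
    omega
  set S₁ := secrets (m.map (Prod.mk a))
  have hS₁ : ∀ z, (a, z) ∈ S₁ ∨ (c, z) ∈ S₁ := fun z => by
    rcases hagents z with rfl | hz | rfl
    · exact Or.inl (subset_applyCalls _ _ rfl)
    · exact Or.inl (hub_mem_applyCalls_of_spoke_mem hz rfl)
    · exact Or.inr (subset_applyCalls _ _ rfl)
  have hS₂ := fun z => mem_gstep_of_mem_or (hS₁ z)
  rw [secrets, applyCalls_append, applyCalls_cons, Set.eq_univ_iff_forall]
  rintro ⟨x, z⟩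
  rcases hagents x with rfl | hx | rfl
  · exact subset_applyCalls _ _ (hS₂ z).1
  · exact spoke_mem_applyCalls_of_hub_mem hx (hS₂ z).1
  · exact subset_applyCalls _ _ (hS₂ z).2
end

section
/- Epistemically indistinguishable sequences give the observing agent the same secrets and the same subsequence of own calls: if σ ∼_a τ (asynchronous relation) then I^σ_a = I^τ_a and σ_a = τ_a, where σ_a is the subsequence of σ of calls involving a. -/
variable {A : Type*}

/-- The asynchronous epistemic relation `∼ₐ`: the smallest equivalence relation
such that `ε ∼ₐ ε`; if `σ ∼ₐ τ` and `a ∉ {b,c}` then `σ;bc ∼ₐ τ`; and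
if `σ ∼ₐ τ` and `I^σ_b = I^τ_b` then `σ;ab ∼ₐ τ;ab` and `σ;ba ∼ₐ τ;ba`. -/
inductive asyncR (a : A) : List (A × A) → List (A × A) → Prop
  | refl (σ) : asyncR a σ σ
  | symm {σ τ} : asyncR a σ τ → asyncR a τ σ
  | trans {σ τ ρ} : asyncR a σ τ → asyncR a τ ρ → asyncR a σ ρ
  | skip {σ τ} {b c : A} : asyncR a σ τ → a ≠ b → a ≠ c →
      asyncR a (σ ++ [(b, c)]) τ
  | callL {σ τ} {b : A} : asyncR a σ τ → secretsOf σ b = secretsOf τ b →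
      asyncR a (σ ++ [(a, b)]) (τ ++ [(a, b)])
  | callR {σ τ} {b : A} : asyncR a σ τ → secretsOf σ b = secretsOf τ b →
      asyncR a (σ ++ [(b, a)]) (τ ++ [(b, a)])

lemma secrets_snoc (σ : List (A × A)) (c : A × A) :
    secrets (σ ++ [c]) = gstep (secrets σ) c := by
  simp [secrets, applyCalls, List.foldl_append]

lemma secretsOf_snoc_other (σ : List (A × A)) {x b c : A} (hb : x ≠ b) (hc : x ≠ c) :
    secretsOf (σ ++ [(b, c)]) x = secretsOf σ x := by
  ext z
  simp [secretsOf, secrets_snoc, gstep, hb, hc]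

lemma secretsOf_snoc_left (σ : List (A × A)) (x c : A) :
    secretsOf (σ ++ [(x, c)]) x = secretsOf σ x ∪ secretsOf σ c := by
  ext z
  by_cases h : x = c <;>
  simp [secretsOf, secrets_snoc, gstep, h, Set.mem_union, or_comm]

lemma secretsOf_snoc_right (σ : List (A × A)) (x b : A) :
    secretsOf (σ ++ [(b, x)]) x = secretsOf σ x ∪ secretsOf σ b := by
  ext z
  by_cases h : x = b <;>
  simp [secretsOf, secrets_snoc, gstep, h, Set.mem_union, or_comm]

/-- Asynchronously indistinguishable sequences give the observer the same
secrets and the same subsequence of own calls. -/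
theorem async_same_view [DecidableEq A] (a : A) (σ τ : List (A × A))
    (h : asyncR a σ τ) :
    secretsOf σ a = secretsOf τ a ∧
    σ.filter (fun c => decide (c.1 = a ∨ c.2 = a)) =
      τ.filter (fun c => decide (c.1 = a ∨ c.2 = a)) := by
  induction h with
  | refl σ => exact ⟨rfl, rfl⟩
  | symm _ ih => exact ⟨ih.1.symm, ih.2.symm⟩
  | trans _ _ ih1 ih2 => exact ⟨ih1.1.trans ih2.1, ih1.2.trans ih2.2⟩
  | @skip σ τ b c _ hb hc ih =>
    refine ⟨(secretsOf_snoc_other σ hb hc).trans ih.1, ?_⟩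
    rw [List.filter_append]
    simpa [hb.symm, hc.symm] using ih.2
  | @callL σ τ b _ hsec ih =>
    refine ⟨?_, ?_⟩
    · rw [secretsOf_snoc_left, secretsOf_snoc_left, ih.1, hsec]
    · rw [List.filter_append, List.filter_append, ih.2]
  | @callR σ τ b _ hsec ih =>
    refine ⟨?_, ?_⟩
    · rw [secretsOf_snoc_right, secretsOf_snoc_right, ih.1, hsec]
    · rw [List.filter_append, List.filter_append, ih.2]
end

section
/- The PIG calling condition is jointly equivalent to the failure of shared knowledge of universal expertise: for every call sequence σ, there exist distinct agents a,b such that σ ⊨ PIG_{ab} if and only if σ ⊭ E Exp_A, where PIG_{ab} := ¬K_a ¬(∃c, (S_a c ∧ ¬S_b c) ∨ (¬S_a c ∧ S_b c)), Exp_A := every agent knows every secret, and E φ := every agent knows φ. -/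
variable {A : Type*}

/-- `PIG_{ab}` holds at `σ`: agent `a` considers it possible that `a` and `b`
know different sets of secrets. -/
def PIGc (a b : A) (σ : List (A × A)) : Prop :=
  ¬ ∀ τ, asyncR a σ τ →
    ¬ ∃ c : A, ((a, c) ∈ secrets τ ∧ (b, c) ∉ secrets τ) ∨
               ((a, c) ∉ secrets τ ∧ (b, c) ∈ secrets τ)


lemma diag_mem_secrets (σ : List (A × A)) (x : A) : (x, x) ∈ secrets σ :=
  subset_applyCalls _ σ rfl

/-- Some call is PIG-permitted after `σ` iff it is not the case that everyone
knows that everyone is an expert. -/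
theorem pig_iff_not_shared_knowledge [Fintype A]
    (hn : 2 ≤ Fintype.card A) (σ : List (A × A)) :
    (∃ a b : A, a ≠ b ∧ PIGc a b σ) ↔
    ¬ ∀ a : A, ∀ τ, asyncR a σ τ → secrets τ = (Set.univ : Set (A × A)) := by
  constructor
  · rintro ⟨a, b, _, hpig⟩ hall
    apply hpig
    intro τ hτ
    rw [hall a τ hτ]
    rintro ⟨c, hc⟩
    rcases hc with ⟨_, h⟩ | ⟨h, _⟩ <;> exact h trivial
  · intro h
    push_neg at h
    obtain ⟨a, τ, hτ, hne⟩ := h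
    have hx : ∃ x : A, secretsOf τ a ≠ secretsOf τ x := by
      by_contra hc
      push_neg at hc
      apply hne
      ext ⟨x, y⟩
      simp only [Set.mem_univ, iff_true]
      have h1 : y ∈ secretsOf τ y := diag_mem_secrets τ y
      rw [← hc y, hc x] at h1
      exact h1
    obtain ⟨x, hx⟩ := hx
    have hax : a ≠ x := fun h => hx (by rw [h])
    refine ⟨a, x, hax, fun hall => ?_⟩
    have := hall τ hτ
    apply this
    have : ∃ c, ¬ (c ∈ secretsOf τ a ↔ c ∈ secretsOf τ x) := by
      by_contra hc
      push_neg at hc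
      exact hx (Set.ext fun c => hc c)
    obtain ⟨c, hc⟩ := this
    by_cases h1 : c ∈ secretsOf τ a
    · exact ⟨c, Or.inl ⟨h1, fun h2 => hc ⟨fun _ => h2, fun _ => h1⟩⟩⟩
    · refine ⟨c, Or.inr ⟨h1, ?_⟩⟩
      by_contra h2
      exact hc ⟨fun h => absurd h h1, fun h => absurd h h2⟩
end

section
/- For three agents a,b,c, after the asynchronous call sequence ab;ac;ab agent a is a super expert: for every call sequence τ with ab;ac;ab ∼_a τ, all three agents are experts after τ. -/
variable {A : Type*}

/-!
Agent `a` observes exactly the sequence of partners of its own calls, so every `τ ∼ₐ ab;ac;ab`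
still contains a call between `a` and `b`, then one between `a` and `c`, then one between `a`
and `b`, with only calls not involving `a` in between. Knowledge only grows and a call merges
the knowledge of both callers: after the first call `a` knows `b`'s secret, after the second
`a` and `c` know all three secrets, and after the third so does `b`.
-/

open Classical in
noncomputable def partner (a : A) (p : A × A) : Option A :=
  if p.1 = a then some p.2 else if p.2 = a then some p.1 else none

noncomputable def partners (a : A) (σ : List (A × A)) : List A :=
  σ.filterMap (partner a)

lemma partner_eq_some {a x : A} {p : A × A} (h : partner a p = some x) :
    p = (a, x) ∨ p = (x, a) := by
  unfold partner at h
  split_ifs at h with h₁ h₂ <;> cases h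
  · exact Or.inl (Prod.ext h₁ rfl)
  · exact Or.inr (Prod.ext rfl h₂)

lemma partners_append (a : A) (σ τ : List (A × A)) :
    partners a (σ ++ τ) = partners a σ ++ partners a τ :=
  List.filterMap_append

lemma partners_singleton_of_ne {a x y : A} (hx : a ≠ x) (hy : a ≠ y) :
    partners a [(x, y)] = [] := by
  simp [partners, partner, hx.symm, hy.symm]

lemma asyncR.partners_eq {a : A} {σ τ : List (A × A)} (h : asyncR a σ τ) :
    partners a σ = partners a τ := by
  induction h with
  | refl => rfl
  | symm _ ih => exact ih.symm
  | trans _ _ ih₁ ih₂ => exact ih₁.trans ih₂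
  | skip _ hx hy ih => rw [partners_append, partners_singleton_of_ne hx hy, List.append_nil, ih]
  | callL _ _ ih | callR _ _ ih => rw [partners_append, partners_append, ih]

lemma mem_secretsOf_self (σ : List (A × A)) (x : A) : x ∈ secretsOf σ x :=
  subset_applyCalls _ σ rfl

lemma secrets_append (σ τ : List (A × A)) :
    secrets (σ ++ τ) = applyCalls (secrets σ) τ :=
  List.foldl_append

lemma secretsOf_mono {σ τ : List (A × A)} (h : σ <+: τ) (x : A) :
    secretsOf σ x ⊆ secretsOf τ x := by
  obtain ⟨ρ, rfl⟩ := h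
  intro z hz
  change (x, z) ∈ secrets (σ ++ ρ)
  exact secrets_append σ ρ ▸ subset_applyCalls _ ρ hz

lemma secretsOf_concat_left (σ : List (A × A)) (x y : A) :
    secretsOf (σ ++ [(x, y)]) x = secretsOf σ x ∪ secretsOf σ y := by
  ext z
  simp only [secretsOf, secrets_append, applyCalls, List.foldl, gstep, Set.mem_ofPred_eq,
    Set.mem_union]
  grind

lemma secretsOf_concat_right (σ : List (A × A)) (x y : A) :
    secretsOf (σ ++ [(x, y)]) y = secretsOf σ x ∪ secretsOf σ y := by
  ext z
  simp only [secretsOf, secrets_append, applyCalls, List.foldl, gstep, Set.mem_ofPred_eq,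
    Set.mem_union]
  grind

lemma exists_prefix_of_partners_eq_concat {a x : A} {l : List A} {σ : List (A × A)}
    (h : partners a σ = l ++ [x]) :
    ∃ σ₁, σ₁ <+: σ ∧ partners a σ₁ = l ∧
      secretsOf σ₁ a ∪ secretsOf σ₁ x ⊆ secretsOf σ a ∩ secretsOf σ x := by
  obtain ⟨σ₁, σ₂, rfl, hσ₁, hσ₂⟩ := List.filterMap_eq_append_iff.mp h
  obtain ⟨ρ₁, p, ρ₂, rfl, hρ₁, hp, -⟩ := List.filterMap_eq_cons_iff.mp hσ₂
  have hpre : σ₁ ++ ρ₁ ++ [p] <+: σ₁ ++ (ρ₁ ++ p :: ρ₂) :=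
    ⟨ρ₂, by simp⟩
  have hmerge : secretsOf (σ₁ ++ ρ₁) a ∪ secretsOf (σ₁ ++ ρ₁) x ⊆
      secretsOf (σ₁ ++ ρ₁ ++ [p]) a ∩ secretsOf (σ₁ ++ ρ₁ ++ [p]) x := by
    rcases partner_eq_some hp with rfl | rfl
    · rw [secretsOf_concat_left, secretsOf_concat_right, Set.inter_self]
    · rw [secretsOf_concat_left, secretsOf_concat_right, Set.inter_self, Set.union_comm]
  refine ⟨σ₁ ++ ρ₁, (List.prefix_append _ _).trans hpre, ?_, ?_⟩
  · rw [partners, List.filterMap_append, hσ₁, List.filterMap_eq_nil_iff.mpr hρ₁, List.append_nil]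
  · exact hmerge.trans (Set.inter_subset_inter (secretsOf_mono hpre a) (secretsOf_mono hpre x))

theorem three_agents_super_expert_general (a b c : A)
    (hcov : ∀ x : A, x = a ∨ x = b ∨ x = c) :
    ∀ τ : List (A × A), asyncR a [(a, b), (a, c), (a, b)] τ →
      secrets τ = (Set.univ : Set (A × A)) := by
  intro τ hτ
  have h₃ : partners a τ = [b, c] ++ [b] := by
    rw [← hτ.partners_eq]
    simp [partners, partner]
  obtain ⟨τ₂, hτ₂, h₂, hmerge₃⟩ := exists_prefix_of_partners_eq_concat h₃
  obtain ⟨τ₁, -, h₁, hmerge₂⟩ := exists_prefix_of_partners_eq_concat (l := [b]) h₂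
  obtain ⟨τ₀, -, -, hmerge₁⟩ := exists_prefix_of_partners_eq_concat (l := []) h₁
  have hb : b ∈ secretsOf τ₁ a := (hmerge₁ (Or.inr (mem_secretsOf_self τ₀ b))).1
  have hexpert₂ : ∀ z, z ∈ secretsOf τ₂ a ∩ secretsOf τ₂ c := by
    intro z
    apply hmerge₂
    rcases hcov z with rfl | rfl | rfl
    exacts [Or.inl (mem_secretsOf_self τ₁ z), Or.inl hb, Or.inr (mem_secretsOf_self τ₁ z)]
  have hexpert₃ : ∀ z, z ∈ secretsOf τ a ∩ secretsOf τ b :=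
    fun z => hmerge₃ (Or.inl (hexpert₂ z).1)
  ext ⟨x, z⟩
  simp only [Set.mem_univ, iff_true]
  rcases hcov x with rfl | rfl | rfl
  exacts [(hexpert₃ z).1, (hexpert₃ z).2, secretsOf_mono hτ₂ x (hexpert₂ z).2]

/-- For three agents, after `ab;ac;ab` agent `a` is a super expert:
all agents are experts after every sequence `a` cannot distinguish from it. -/
theorem three_agents_super_expert (a b c : A)
    (hab : a ≠ b) (hac : a ≠ c) (hbc : b ≠ c)
    (hcov : ∀ x : A, x = a ∨ x = b ∨ x = c) :
    ∀ τ : List (A × A), asyncR a [(a, b), (a, c), (a, b)] τ →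
      secrets τ = (Set.univ : Set (A × A)) :=
  three_agents_super_expert_general a b c hcov
end
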